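/- arXiv:1910.04831 — 5 statements merged into one kernel-verified Lean document; each statement's English description precedes it below -/
import Mathlib

section
/- For any matrix X ∈ ℝ^{m×n}, the nuclear norm of X equals the minimum over all factorizations X = U V with U ∈ ℝ^{m×r}, V ∈ ℝ^{r×n} (for r at least the rank of X) of (1/2)(‖U‖_F² + ‖V‖_F²). -/
open Matrix

noncomputable def frobInner {ι κ : Type*} [Fintype ι] [Fintype κ]
    (A B : Matrix ι κ ℝ) : ℝ := (Aᵀ * B).trace

noncomputable def frobNorm {ι κ : Type*} [Fintype ι] [Fintype κ]
    (A : Matrix ι κ ℝ) : ℝ := Real.sqrt (∑ i, ∑ j, (A i j) ^ 2)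

noncomputable def nuclearNorm {m n : ℕ} (X : Matrix (Fin m) (Fin n) ℝ) : ℝ :=
  ∑ i : Fin n, Real.sqrt ((Matrix.isHermitian_conjTranspose_mul_self X).eigenvalues i)

noncomputable def specNorm {m n : ℕ} (X : Matrix (Fin m) (Fin n) ℝ) : ℝ :=
  ⨆ i : Fin n, Real.sqrt ((Matrix.isHermitian_conjTranspose_mul_self X).eigenvalues i)

/-!
Diagonalise `XᵀX = W diag(σ²) Wᵀ` with `W` orthogonal, so that `M = X W` has orthogonal columns
of lengths `σᵢ`. Rescaling columns, `M = (M diag σ^(-1/2)) diag σ^(1/2)` attains `∑ σᵢ`.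
Conversely, if `M = U V` then `P = M diag σ⁻¹` (with `0⁻¹ = 0`) satisfies `P Pᵀ P = P` and
`∑ σᵢ = ⟨Uᵀ P, V⟩ ≤ ½ (‖Uᵀ P‖² + ‖V‖²) ≤ ½ (‖U‖² + ‖V‖²)`, since right multiplication by such
a `P` does not increase the Frobenius norm.
-/

section Frobenius

variable {ι κ ρ : Type*} [Fintype ι] [Fintype κ] [Fintype ρ]

lemma frobNorm_nonneg (A : Matrix ι κ ℝ) : 0 ≤ frobNorm A :=
  Real.sqrt_nonneg _

lemma frobNorm_sq_eq_trace (A : Matrix ι κ ℝ) : frobNorm A ^ 2 = (Aᵀ * A).trace := by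
  rw [frobNorm, Real.sq_sqrt (by positivity), Finset.sum_comm]
  simp only [trace, diag_apply, mul_apply, transpose_apply, sq]

lemma frobNorm_transpose (A : Matrix ι κ ℝ) : frobNorm Aᵀ = frobNorm A := by
  rw [frobNorm, frobNorm, Finset.sum_comm]
  rfl

lemma frobNorm_sq_eq_trace_mul_transpose (A : Matrix ι κ ℝ) :
    frobNorm A ^ 2 = (A * Aᵀ).trace := by
  rw [← frobNorm_transpose, frobNorm_sq_eq_trace, transpose_transpose]

lemma two_mul_frobInner_le (A B : Matrix ι κ ℝ) :
    2 * frobInner A B ≤ frobNorm A ^ 2 + frobNorm B ^ 2 := by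
  have hsq := frobNorm_sq_eq_trace (A - B)
  have hsymm : (Bᵀ * A).trace = (Aᵀ * B).trace := by
    rw [← trace_transpose, transpose_mul, transpose_transpose]
  rw [transpose_sub, Matrix.sub_mul, Matrix.mul_sub, Matrix.mul_sub, trace_sub, trace_sub,
    trace_sub, hsymm] at hsq
  rw [frobInner, frobNorm_sq_eq_trace, frobNorm_sq_eq_trace]
  linarith [sq_nonneg (frobNorm (A - B))]

lemma frobNorm_mul_of_mul_transpose_eq_one [DecidableEq κ] (A : Matrix ι κ ℝ) {W : Matrix κ ρ ℝ}
    (hW : W * Wᵀ = 1) : frobNorm (A * W) = frobNorm A := by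
  rw [← sq_eq_sq₀ (frobNorm_nonneg _) (frobNorm_nonneg _), frobNorm_sq_eq_trace_mul_transpose,
    frobNorm_sq_eq_trace_mul_transpose, transpose_mul, Matrix.mul_assoc, ← Matrix.mul_assoc W,
    hW, Matrix.one_mul]

lemma frobNorm_mul_le_of_mul_transpose_mul_eq_self (A : Matrix ι κ ℝ) {P : Matrix κ ρ ℝ}
    (hP : P * Pᵀ * P = P) : frobNorm (A * P) ≤ frobNorm A := by
  classical
  set Q : Matrix κ κ ℝ := 1 - P * Pᵀ
  have hPP : P * Pᵀ * (P * Pᵀ) = P * Pᵀ := by rw [← Matrix.mul_assoc, hP]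
  have hQ : Q * Qᵀ = Q := by
    simp only [Q, transpose_sub, transpose_one, transpose_mul, transpose_transpose]
    noncomm_ring [hPP]
  have hpyth : frobNorm A ^ 2 = frobNorm (A * P) ^ 2 + frobNorm (A * Q) ^ 2 := by
    simp only [frobNorm_sq_eq_trace_mul_transpose, transpose_mul, Matrix.mul_assoc]
    rw [← Matrix.mul_assoc Q, hQ]
    simp only [Q, Matrix.sub_mul, Matrix.one_mul, Matrix.mul_sub, Matrix.mul_assoc, trace_sub]
    ring
  exact (pow_le_pow_iff_left₀ (frobNorm_nonneg _) (frobNorm_nonneg _) two_ne_zero).mp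
    (by linarith [sq_nonneg (frobNorm (A * Q))])

end Frobenius

section DiagonalGram

variable {ι κ : Type*} [Fintype ι] [Fintype κ] [DecidableEq κ] {M : Matrix ι κ ℝ}

lemma mul_diagonal_eq_self_of_transpose_mul_self_eq_diagonal {d c : κ → ℝ}
    (hM : Mᵀ * M = diagonal d) (hc : ∀ i, d i ≠ 0 → c i = 1) : M * diagonal c = M := by
  have hgram : (M * diagonal (c - 1))ᴴ * (M * diagonal (c - 1)) = 0 := by
    rw [conjTranspose_eq_transpose_of_trivial, transpose_mul, diagonal_transpose,
      Matrix.mul_assoc, ← Matrix.mul_assoc Mᵀ, hM, diagonal_mul_diagonal, diagonal_mul_diagonal,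
      diagonal_eq_zero]
    funext i
    by_cases hd : d i = 0
    · simp [hd]
    · simp [hc i hd]
  have hsub : M * diagonal c - M = M * diagonal (c - 1) := by
    ext i j
    simp [mul_diagonal, mul_sub]
  rw [← sub_eq_zero, hsub]
  exact conjTranspose_mul_self_eq_zero.mp hgram

variable {σ : κ → ℝ}

lemma exists_factorization_of_transpose_mul_self_eq_diagonal (hσ : ∀ i, 0 ≤ σ i)
    (hM : Mᵀ * M = diagonal fun i => σ i ^ 2) :
    ∃ (U : Matrix ι κ ℝ) (V : Matrix κ κ ℝ),
      M = U * V ∧ frobNorm U ^ 2 = ∑ i, σ i ∧ frobNorm V ^ 2 = ∑ i, σ i := by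
  refine ⟨M * diagonal fun i => (√(σ i))⁻¹, diagonal fun i => √(σ i), ?_, ?_, ?_⟩
  · rw [Matrix.mul_assoc, diagonal_mul_diagonal,
      mul_diagonal_eq_self_of_transpose_mul_self_eq_diagonal hM]
    intro i hi
    have hpos : 0 < σ i := (hσ i).lt_of_ne' (pow_ne_zero_iff two_ne_zero |>.mp hi)
    exact inv_mul_cancel₀ (Real.sqrt_pos.mpr hpos).ne'
  · rw [frobNorm_sq_eq_trace, transpose_mul, diagonal_transpose, Matrix.mul_assoc,
      ← Matrix.mul_assoc Mᵀ, hM, diagonal_mul_diagonal, diagonal_mul_diagonal, trace_diagonal]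
    refine Finset.sum_congr rfl fun i _ => ?_
    rcases (hσ i).eq_or_lt with hi | hi
    · simp [← hi]
    · have hsqrt : √(σ i) ≠ 0 := Real.sqrt_ne_zero'.mpr hi
      field_simp
      rw [Real.sq_sqrt hi.le]
  · rw [frobNorm_sq_eq_trace, diagonal_transpose, diagonal_mul_diagonal, trace_diagonal]
    exact Finset.sum_congr rfl fun i _ => Real.mul_self_sqrt (hσ i)

lemma sum_le_half_frobNorm_sq_of_transpose_mul_self_eq_diagonal
    (hM : Mᵀ * M = diagonal fun i => σ i ^ 2)
    {ρ : Type*} [Fintype ρ] {U : Matrix ι ρ ℝ} {V : Matrix ρ κ ℝ} (hUV : M = U * V) :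
    ∑ i, σ i ≤ 1 / 2 * (frobNorm U ^ 2 + frobNorm V ^ 2) := by
  set P := M * diagonal fun i => (σ i)⁻¹
  have hPtP : Pᵀ * P = diagonal fun i => (σ i)⁻¹ * σ i := by
    rw [transpose_mul, diagonal_transpose, Matrix.mul_assoc, ← Matrix.mul_assoc Mᵀ, hM,
      diagonal_mul_diagonal, diagonal_mul_diagonal]
    simp only [sq, mul_self_mul_inv]
  have hP : P * Pᵀ * P = P := by
    rw [Matrix.mul_assoc, hPtP, Matrix.mul_assoc, diagonal_mul_diagonal]
    congr 2
    funext i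
    simpa only [inv_inv, mul_assoc] using mul_self_mul_inv (σ i)⁻¹
  have htrace : ∑ i, σ i = frobInner (Uᵀ * P) V := by
    rw [frobInner, transpose_mul, transpose_transpose, Matrix.mul_assoc, ← hUV, transpose_mul,
      diagonal_transpose, Matrix.mul_assoc, hM, diagonal_mul_diagonal, trace_diagonal]
    simp only [sq, ← mul_assoc, inv_mul_mul_self]
  have hUP : frobNorm (Uᵀ * P) ≤ frobNorm U :=
    frobNorm_transpose U ▸ frobNorm_mul_le_of_mul_transpose_mul_eq_self Uᵀ hP
  calc ∑ i, σ i ≤ 1 / 2 * (frobNorm (Uᵀ * P) ^ 2 + frobNorm V ^ 2) := by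
        linarith [two_mul_frobInner_le (Uᵀ * P) V]
    _ ≤ 1 / 2 * (frobNorm U ^ 2 + frobNorm V ^ 2) := by
        gcongr
        exact frobNorm_nonneg _

end DiagonalGram

lemma Matrix.IsHermitian.exists_orthogonal_diagonalize {n : Type*} [Fintype n] [DecidableEq n]
    {A : Matrix n n ℝ} (hA : A.IsHermitian) :
    ∃ W : Matrix n n ℝ, W * Wᵀ = 1 ∧ Wᵀ * W = 1 ∧ Wᵀ * A * W = diagonal hA.eigenvalues := by
  refine ⟨hA.eigenvectorUnitary, ?_, ?_, ?_⟩
  · simp [← conjTranspose_eq_transpose_of_trivial, ← star_eq_conjTranspose]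
  · simp [← conjTranspose_eq_transpose_of_trivial, ← star_eq_conjTranspose]
  · simpa [Unitary.conjStarAlgAut_star_apply, ← conjTranspose_eq_transpose_of_trivial,
      ← star_eq_conjTranspose] using hA.conjStarAlgAut_star_eigenvectorUnitary

theorem nuclearNorm_eq_min_factorization {m n : ℕ} (X : Matrix (Fin m) (Fin n) ℝ) :
    IsLeast {c : ℝ | ∃ (r : ℕ) (U : Matrix (Fin m) (Fin r) ℝ) (V : Matrix (Fin r) (Fin n) ℝ),
        X.rank ≤ r ∧ X = U * V ∧ c = (1 / 2) * (frobNorm U ^ 2 + frobNorm V ^ 2)}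
      (nuclearNorm X) := by
  have hH := isHermitian_conjTranspose_mul_self X
  set σ : Fin n → ℝ := fun i => √(hH.eigenvalues i)
  have hnuc : nuclearNorm X = ∑ i, σ i := rfl
  obtain ⟨W, hWWt, hWtW, hdiag⟩ := hH.exists_orthogonal_diagonalize
  have hM : (X * W)ᵀ * (X * W) = diagonal fun i => σ i ^ 2 := by
    simp only [σ, Real.sq_sqrt ((posSemidef_conjTranspose_mul_self X).eigenvalues_nonneg _)]
    rw [← hdiag, transpose_mul, conjTranspose_eq_transpose_of_trivial]
    simp only [Matrix.mul_assoc]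
  refine ⟨?_, ?_⟩
  · obtain ⟨U, V, hUV, hU, hV⟩ :=
      exists_factorization_of_transpose_mul_self_eq_diagonal (fun i => Real.sqrt_nonneg _) hM
    refine ⟨n, U, V * Wᵀ, X.rank_le_width, ?_, ?_⟩
    · rw [← Matrix.mul_assoc, ← hUV, Matrix.mul_assoc, hWWt, Matrix.mul_one]
    · rw [frobNorm_mul_of_mul_transpose_eq_one V (by rwa [transpose_transpose]), hU, hV, hnuc]
      ring
  · rintro _ ⟨r, U, V, -, hX, rfl⟩
    rw [hnuc, ← frobNorm_mul_of_mul_transpose_eq_one V hWWt]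
    exact sum_le_half_frobNorm_sq_of_transpose_mul_self_eq_diagonal hM
      (by rw [hX, Matrix.mul_assoc])
end

section
/- Under the hypotheses of the previous stationarity lemma, any stationary point (Ū, V̄) of f(U,V) = (1/2)(‖U‖_F² + ‖V‖_F²) + (μ/2)‖𝓑(UV) − d‖₂² satisfies ‖Ū‖_F² = ‖V̄‖_F². -/
open Matrix

/-! Stationarity says `U = -G Vᵀ` and `Vᵀ = -Gᵀ U` for the gradient `G = μ 𝓑*(𝓑(UV) - d)` of the
data term, so both `‖U‖_F² = tr(UᵀU)` and `‖V‖_F² = tr(VᵀV)` equal `-tr(Uᵀ G Vᵀ)`. -/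

lemma frobNorm_sq {ι κ : Type*} [Fintype ι] [Fintype κ] (A : Matrix ι κ ℝ) :
    frobNorm A ^ 2 = (Aᵀ * A).trace := by
  rw [frobNorm, Real.sq_sqrt (by positivity), Finset.sum_comm]
  simp [Matrix.trace, Matrix.mul_apply, sq]

lemma trace_transpose_mul_self_eq_of_add_eq_zero {ι κ ρ R : Type*} [Fintype ι] [Fintype κ]
    [Fintype ρ] [CommRing R] {G : Matrix ι κ R} {U : Matrix ι ρ R} {V : Matrix ρ κ R}
    (hU : G * Vᵀ + U = 0) (hV : Gᵀ * U + Vᵀ = 0) :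
    (Uᵀ * U).trace = (Vᵀ * V).trace := by
  have hU' : U = -(G * Vᵀ) := eq_neg_of_add_eq_zero_right hU
  have hV' : Vᵀ = -(Gᵀ * U) := eq_neg_of_add_eq_zero_right hV
  calc (Uᵀ * U).trace = -(Uᵀ * G * Vᵀ).trace := by
        nth_rewrite 2 [hU']
        rw [Matrix.mul_neg, Matrix.trace_neg, Matrix.mul_assoc]
    _ = -(V * Gᵀ * U).trace := by
        rw [← Matrix.trace_transpose (V * Gᵀ * U)]
        simp only [Matrix.transpose_mul, Matrix.transpose_transpose, Matrix.mul_assoc]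
    _ = (V * Vᵀ).trace := by rw [hV', Matrix.mul_neg, Matrix.trace_neg, Matrix.mul_assoc]
    _ = (Vᵀ * V).trace := Matrix.trace_mul_comm V Vᵀ

theorem stationary_frobNorm_eq_general {m n r L : ℕ} (μ : ℝ)
    (B : Matrix (Fin m) (Fin n) ℝ →ₗ[ℝ] (Fin L → ℝ))
    (Bstar : (Fin L → ℝ) →ₗ[ℝ] Matrix (Fin m) (Fin n) ℝ)
    (d : Fin L → ℝ)
    (U : Matrix (Fin m) (Fin r) ℝ) (V : Matrix (Fin r) (Fin n) ℝ)
    (hU : (μ • Bstar (B (U * V) - d)) * Vᵀ + U = 0)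
    (hV : (μ • Bstar (B (U * V) - d))ᵀ * U + Vᵀ = 0) :
    frobNorm U ^ 2 = frobNorm V ^ 2 := by
  rw [frobNorm_sq, frobNorm_sq]
  exact trace_transpose_mul_self_eq_of_add_eq_zero hU hV

theorem stationary_frobNorm_eq {m n r L : ℕ} (μ : ℝ) (hμ : 0 < μ)
    (B : Matrix (Fin m) (Fin n) ℝ →ₗ[ℝ] (Fin L → ℝ))
    (Bstar : (Fin L → ℝ) →ₗ[ℝ] Matrix (Fin m) (Fin n) ℝ)
    (hadj : ∀ (z : Fin L → ℝ) (A : Matrix (Fin m) (Fin n) ℝ),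
      frobInner (Bstar z) A = ∑ i, z i * B A i)
    (d : Fin L → ℝ)
    (U : Matrix (Fin m) (Fin r) ℝ) (V : Matrix (Fin r) (Fin n) ℝ)
    (hU : (μ • Bstar (B (U * V) - d)) * Vᵀ + U = 0)
    (hV : (μ • Bstar (B (U * V) - d))ᵀ * U + Vᵀ = 0) :
    frobNorm U ^ 2 = frobNorm V ^ 2 :=
  stationary_frobNorm_eq_general μ B Bstar d U V hU hV
end

section
/- Let W₁ ∈ ℝ^{m×m}, W₂ ∈ ℝ^{n×n}, X ∈ ℝ^{m×n} be such that the block matrix [W₁, X; Xᵀ, W₂] is positive semidefinite. Then (1/2)(tr(W₁) + tr(W₂)) ≥ ‖X‖_*. -/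
/-!
Write `X V = A Σ` with `V` orthogonal diagonalising `XᵀX = V Σ² Vᵀ` and `A = X V Σ⁺` a partial
isometry, so that `tr (Aᵀ X V) = tr Σ = ‖X‖_*`. Testing the positive semidefinite block matrix
against `[A; -V]` gives `2 tr (Aᵀ X V) ≤ tr (Aᵀ W₁ A) + tr (Vᵀ W₂ V)`; the last trace is `tr W₂`,
and `tr (Aᵀ W₁ A) = tr (W₁ P) ≤ tr W₁` because `P = A Aᵀ` is an orthogonal projection, so that
`tr W₁ - tr (W₁ P) = tr ((1 - P) W₁ (1 - P)) ≥ 0`.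
-/

open Matrix

open scoped ComplexOrder

namespace Matrix

variable {m n k : Type*} [Fintype m] [Fintype n] [Fintype k]

theorem PosSemidef.two_mul_trace_le_of_fromBlocks {W₁ : Matrix m m ℝ} {W₂ : Matrix n n ℝ}
    {X : Matrix m n ℝ} (h : (fromBlocks W₁ X Xᵀ W₂).PosSemidef) (A : Matrix m k ℝ)
    (B : Matrix n k ℝ) :
    2 * (Aᵀ * X * B).trace ≤ (Aᵀ * W₁ * A).trace + (Bᵀ * W₂ * B).trace := by
  have hC := (h.conjTranspose_mul_mul_same (fromRows A (-B))).trace_nonneg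
  rw [conjTranspose_fromRows_eq_fromCols_conjTranspose, fromCols_mul_fromBlocks,
    fromCols_mul_fromRows] at hC
  simp only [conjTranspose_eq_transpose_of_trivial, transpose_neg, Matrix.neg_mul,
    Matrix.mul_neg, Matrix.add_mul, trace_add, trace_neg] at hC
  have hsymm : (Bᵀ * Xᵀ * A).trace = (Aᵀ * X * B).trace := by
    rw [← trace_transpose]
    simp only [transpose_mul, transpose_transpose, Matrix.mul_assoc]
  linarith

theorem PosSemidef.trace_conjTranspose_mul_mul_le_trace {𝕜 : Type*} [RCLike 𝕜]
    {W : Matrix m m 𝕜} (hW : W.PosSemidef) {A : Matrix m k 𝕜} (hA : A * Aᴴ * A = A) :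
    (Aᴴ * W * A).trace ≤ W.trace := by
  classical
  set P := A * Aᴴ
  have hP : Pᴴ = P := by simp [P]
  have hPP : (1 - P) * (1 - P) = 1 - P := by
    have : P * P = P := by rw [← Matrix.mul_assoc, hA]
    rw [sub_mul, one_mul, mul_sub, mul_one, this, sub_self, sub_zero]
  have hcompl := (hW.mul_mul_conjTranspose_same (1 - P)).trace_nonneg
  rw [conjTranspose_sub, conjTranspose_one, hP, trace_mul_cycle, hPP, sub_mul, one_mul,
    trace_sub, sub_nonneg] at hcompl
  rwa [trace_mul_cycle]

theorem IsHermitian.transpose_eigenvectorUnitary_mul_mul [DecidableEq n] {M : Matrix n n ℝ}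
    (hM : M.IsHermitian) :
    (hM.eigenvectorUnitary : Matrix n n ℝ)ᵀ * M * hM.eigenvectorUnitary =
      diagonal hM.eigenvalues := by
  simpa [Unitary.conjStarAlgAut_apply, star_eq_conjTranspose] using
    hM.conjStarAlgAut_star_eigenvectorUnitary

end Matrix

theorem exists_partialIsometry_trace_eq_nuclearNorm {m n : ℕ} (X : Matrix (Fin m) (Fin n) ℝ) :
    ∃ (A : Matrix (Fin m) (Fin n) ℝ) (V : Matrix (Fin n) (Fin n) ℝ),
      A * Aᵀ * A = A ∧ V * Vᵀ = 1 ∧ (Aᵀ * X * V).trace = nuclearNorm X := by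
  set hH := isHermitian_conjTranspose_mul_self X
  set V : Matrix (Fin n) (Fin n) ℝ := ↑hH.eigenvectorUnitary
  set σ := fun i => √(hH.eigenvalues i)
  have hdiag : Vᵀ * (Xᵀ * X) * V = diagonal (σ * σ) := by
    rw [← conjTranspose_eq_transpose_of_trivial X, hH.transpose_eigenvectorUnitary_mul_mul]
    congr 1
    ext i
    exact (Real.mul_self_sqrt (eigenvalues_conjTranspose_mul_self_nonneg X i)).symm
  have hV : V * Vᵀ = 1 := by
    simpa [V, star_eq_conjTranspose] using Unitary.coe_mul_star_self hH.eigenvectorUnitary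
  -- `σ⁻¹` is the pseudo-inverse of `σ`, thanks to `0⁻¹ = 0`.
  refine ⟨X * V * diagonal σ⁻¹, V, ?_, hV, ?_⟩
  · calc X * V * diagonal σ⁻¹ * (X * V * diagonal σ⁻¹)ᵀ * (X * V * diagonal σ⁻¹)
          = X * V * (diagonal σ⁻¹ * diagonal σ⁻¹ * (Vᵀ * (Xᵀ * X) * V) * diagonal σ⁻¹) := by
            simp only [transpose_mul, diagonal_transpose, Matrix.mul_assoc]
        _ = X * V * diagonal σ⁻¹ := by
            rw [hdiag, diagonal_mul_diagonal, diagonal_mul_diagonal, diagonal_mul_diagonal]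
            congr 2
            ext i
            rcases eq_or_ne (σ i) 0 with hσ | hσ
            · simp [hσ]
            · simp only [Pi.mul_apply, Pi.inv_apply]
              field_simp
  · calc ((X * V * diagonal σ⁻¹)ᵀ * X * V).trace
          = (diagonal σ⁻¹ * (Vᵀ * (Xᵀ * X) * V)).trace := by
            simp only [transpose_mul, diagonal_transpose, Matrix.mul_assoc]
      _ = nuclearNorm X := by
          rw [hdiag, diagonal_mul_diagonal, trace_diagonal, nuclearNorm]
          simp only [Pi.mul_apply, Pi.inv_apply, ← mul_assoc, inv_mul_mul_self, σ]

theorem trace_ge_nuclearNorm_of_block_posSemidef {m n : ℕ}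
    (W₁ : Matrix (Fin m) (Fin m) ℝ) (W₂ : Matrix (Fin n) (Fin n) ℝ)
    (X : Matrix (Fin m) (Fin n) ℝ)
    (h : (Matrix.fromBlocks W₁ X Xᵀ W₂).PosSemidef) :
    (1 / 2) * (W₁.trace + W₂.trace) ≥ nuclearNorm X := by
  obtain ⟨A, V, hA, hV, hAXV⟩ := exists_partialIsometry_trace_eq_nuclearNorm X
  have hW₁ : W₁.PosSemidef := h.submatrix Sum.inl
  have hblock := h.two_mul_trace_le_of_fromBlocks A V
  have htrW₁ := hW₁.trace_conjTranspose_mul_mul_le_trace (A := A)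
    (by rwa [conjTranspose_eq_transpose_of_trivial])
  rw [conjTranspose_eq_transpose_of_trivial] at htrW₁
  have htrW₂ : (Vᵀ * W₂ * V).trace = W₂.trace := by
    rw [trace_mul_cycle, hV, Matrix.one_mul]
  linarith
end

section
/- For any X ∈ ℝ^{m×n} with singular value decomposition X = UΣVᵀ, setting W₁ = UΣUᵀ and W₂ = VΣVᵀ gives a positive semidefinite block matrix [W₁, X; Xᵀ, W₂] with (1/2)(tr(W₁) + tr(W₂)) = ‖X‖_*. Hence the minimum of (1/2)(tr(W₁)+tr(W₂)) over all W₁, W₂ making the block matrix PSD equals ‖X‖_*. -/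
open Matrix

/-!
The block matrix is `R D Rᵀ` for `R = [U; V]`, hence positive semidefinite, and its half-trace is
`tr Σ`, which is `‖X‖_*` because `VΣVᵀ` is the square root of `XᵀX`. Conversely, compressing a
positive semidefinite `[W₁, X; Xᵀ, W₂]` by `[U; -V]` gives
`0 ≤ tr(UᵀW₁U) + tr(VᵀW₂V) - 2 tr(UᵀXV)`, and compression by a matrix with orthonormal columns
does not increase the trace of a positive semidefinite matrix.
-/

namespace Matrix

variable {k l r : Type*}

namespace PosSemidef

theorem toBlocks₁₁ {M : Matrix (k ⊕ l) (k ⊕ l) ℝ} (hM : M.PosSemidef) :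
    M.toBlocks₁₁.PosSemidef :=
  hM.submatrix Sum.inl

theorem toBlocks₂₂ {M : Matrix (k ⊕ l) (k ⊕ l) ℝ} (hM : M.PosSemidef) :
    M.toBlocks₂₂.PosSemidef :=
  hM.submatrix Sum.inr

end PosSemidef

variable [Fintype k] [Fintype l] [Fintype r]

theorem trace_mul_mul_transpose_of_transpose_mul_eq_one [DecidableEq r]
    {A : Matrix k r ℝ} (hA : Aᵀ * A = 1) (D : Matrix r r ℝ) :
    (A * D * Aᵀ).trace = D.trace := by
  rw [trace_mul_cycle, hA, one_mul]

namespace PosSemidef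

theorem trace_transpose_mul_mul_le [DecidableEq k] [DecidableEq r] {W : Matrix k k ℝ}
    (hW : W.PosSemidef) {A : Matrix k r ℝ} (hA : Aᵀ * A = 1) :
    (Aᵀ * W * A).trace ≤ W.trace := by
  set P : Matrix k k ℝ := 1 - A * Aᵀ with hP
  have hP_idem : P * P = P := by
    have : A * Aᵀ * (A * Aᵀ) = A * Aᵀ := by
      rw [Matrix.mul_assoc, ← Matrix.mul_assoc Aᵀ, hA, Matrix.one_mul]
    simp only [P, Matrix.sub_mul, Matrix.mul_sub, Matrix.one_mul, Matrix.mul_one, this]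
    abel
  have hP_symm : Pᵀ = P := by simp [P, transpose_sub, transpose_mul]
  have hPWP : (P * W * P).PosSemidef := by
    simpa [conjTranspose_eq_transpose_of_trivial, hP_symm] using hW.mul_mul_conjTranspose_same P
  calc (Aᵀ * W * A).trace
      ≤ (Aᵀ * W * A).trace + (P * W * P).trace := le_add_of_nonneg_right hPWP.trace_nonneg
    _ = W.trace := by
      rw [trace_mul_cycle P W P, hP_idem, hP, Matrix.sub_mul, Matrix.one_mul, trace_sub,
        trace_mul_cycle Aᵀ W A]
      ring

theorem fromBlocks_mul_mul_transpose {D : Matrix r r ℝ} (hD : D.PosSemidef)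
    (U : Matrix k r ℝ) (V : Matrix l r ℝ) :
    (fromBlocks (U * D * Uᵀ) (U * D * Vᵀ) (V * D * Uᵀ) (V * D * Vᵀ)).PosSemidef := by
  simpa [conjTranspose_eq_transpose_of_trivial, transpose_fromRows, fromRows_mul,
    fromRows_mul_fromCols] using hD.mul_mul_conjTranspose_same (fromRows U V)

theorem two_mul_trace_le_of_fromBlocks_s9 {W₁ : Matrix k k ℝ} {X : Matrix k l ℝ}
    {W₂ : Matrix l l ℝ} (hW : (fromBlocks W₁ X Xᵀ W₂).PosSemidef)
    (U : Matrix k r ℝ) (V : Matrix l r ℝ) :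
    2 * (Uᵀ * X * V).trace ≤ (Uᵀ * W₁ * U).trace + (Vᵀ * W₂ * V).trace := by
  have hcompress := (hW.conjTranspose_mul_mul_same (fromRows U (-V))).trace_nonneg
  have hXV : (Vᵀ * Xᵀ * U).trace = (Uᵀ * X * V).trace := by
    rw [← trace_transpose]
    simp [transpose_mul, Matrix.mul_assoc]
  simp only [conjTranspose_eq_transpose_of_trivial, transpose_fromRows, transpose_neg,
    fromCols_mul_fromBlocks, fromCols_mul_fromRows, Matrix.add_mul, Matrix.neg_mul,
    Matrix.mul_neg, trace_add, trace_neg, hXV] at hcompress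
  linarith

theorem two_mul_trace_le_trace_add_trace_of_fromBlocks [DecidableEq k] [DecidableEq l]
    [DecidableEq r] {W₁ : Matrix k k ℝ} {X : Matrix k l ℝ} {W₂ : Matrix l l ℝ}
    (hW : (fromBlocks W₁ X Xᵀ W₂).PosSemidef)
    {U : Matrix k r ℝ} {V : Matrix l r ℝ} (hU : Uᵀ * U = 1) (hV : Vᵀ * V = 1) :
    2 * (Uᵀ * X * V).trace ≤ W₁.trace + W₂.trace := by
  have hW₁ : W₁.PosSemidef := by simpa using hW.toBlocks₁₁
  have hW₂ : W₂.PosSemidef := by simpa using hW.toBlocks₂₂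
  linarith [hW.two_mul_trace_le_of_fromBlocks_s9 U V, hW₁.trace_transpose_mul_mul_le hU,
    hW₂.trace_transpose_mul_mul_le hV]

open scoped MatrixOrder in
theorem trace_sqrt [DecidableEq k] {A : Matrix k k ℝ} (hA : A.PosSemidef) :
    (CFC.sqrt A).trace = ∑ i, √(hA.1.eigenvalues i) := by
  rw [CFC.sqrt_eq_cfc, cfc_nnreal_eq_real _ A, hA.1.cfc_eq]
  simp only [IsHermitian.cfc, Unitary.conjStarAlgAut_apply]
  rw [trace_mul_comm, ← Matrix.mul_assoc, Unitary.coe_star_mul_self, Matrix.one_mul,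
    trace_diagonal]
  simp [hA.eigenvalues_nonneg]

end PosSemidef

end Matrix

open scoped MatrixOrder in
theorem nuclearNorm_eq_trace_of_mul_self_eq {m n : ℕ} {X : Matrix (Fin m) (Fin n) ℝ}
    {S : Matrix (Fin n) (Fin n) ℝ} (hS : S.PosSemidef) (hSS : S * S = Xᵀ * X) :
    nuclearNorm X = S.trace := by
  have hXX : (Xᵀ * X).PosSemidef := by
    simpa [conjTranspose_eq_transpose_of_trivial] using posSemidef_conjTranspose_mul_self X
  rw [← CFC.sqrt_unique hSS hS.nonneg, hXX.trace_sqrt]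
  rfl

theorem nuclearNorm_mul_diagonal_mul_transpose {m n r : ℕ} {U : Matrix (Fin m) (Fin r) ℝ}
    {V : Matrix (Fin n) (Fin r) ℝ} {σ : Fin r → ℝ} (hσ : ∀ i, 0 ≤ σ i) (hU : Uᵀ * U = 1)
    (hV : Vᵀ * V = 1) :
    nuclearNorm (U * diagonal σ * Vᵀ) = ∑ i, σ i := by
  have hVσV : (V * diagonal σ * Vᵀ).PosSemidef := by
    simpa [conjTranspose_eq_transpose_of_trivial] using
      (posSemidef_diagonal_iff.mpr hσ).mul_mul_conjTranspose_same V
  have hsq : V * diagonal σ * Vᵀ * (V * diagonal σ * Vᵀ) =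
      (U * diagonal σ * Vᵀ)ᵀ * (U * diagonal σ * Vᵀ) := by
    simp only [transpose_mul, transpose_transpose, diagonal_transpose, Matrix.mul_assoc]
    rw [← Matrix.mul_assoc Vᵀ V, hV, Matrix.one_mul, ← Matrix.mul_assoc Uᵀ U, hU, Matrix.one_mul]
  rw [nuclearNorm_eq_trace_of_mul_self_eq hVσV hsq,
    trace_mul_mul_transpose_of_transpose_mul_eq_one hV, trace_diagonal]

theorem svd_block_attains_nuclearNorm {m n r : ℕ}
    (X : Matrix (Fin m) (Fin n) ℝ)
    (U : Matrix (Fin m) (Fin r) ℝ) (V : Matrix (Fin n) (Fin r) ℝ) (σ : Fin r → ℝ)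
    (hσ : ∀ i, 0 ≤ σ i) (hU : Uᵀ * U = 1) (hV : Vᵀ * V = 1)
    (hX : X = U * Matrix.diagonal σ * Vᵀ) :
    (Matrix.fromBlocks (U * Matrix.diagonal σ * Uᵀ) X Xᵀ (V * Matrix.diagonal σ * Vᵀ)).PosSemidef ∧
    (1 / 2) * ((U * Matrix.diagonal σ * Uᵀ).trace + (V * Matrix.diagonal σ * Vᵀ).trace)
      = nuclearNorm X ∧
    IsLeast {c : ℝ | ∃ (W₁ : Matrix (Fin m) (Fin m) ℝ) (W₂ : Matrix (Fin n) (Fin n) ℝ),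
        (Matrix.fromBlocks W₁ X Xᵀ W₂).PosSemidef ∧ c = (1 / 2) * (W₁.trace + W₂.trace)}
      (nuclearNorm X) := by
  set D := diagonal σ
  have hD : D.PosSemidef := posSemidef_diagonal_iff.mpr hσ
  have hXT : Xᵀ = V * D * Uᵀ := by simp [hX, D, transpose_mul, Matrix.mul_assoc]
  have hblock : (fromBlocks (U * D * Uᵀ) X Xᵀ (V * D * Vᵀ)).PosSemidef := by
    rw [hXT, hX]
    exact hD.fromBlocks_mul_mul_transpose U V
  have hUXV : Uᵀ * X * V = D := by
    simp only [hX, Matrix.mul_assoc, hV, Matrix.mul_one]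
    rw [← Matrix.mul_assoc, hU, Matrix.one_mul]
  have hnuc : nuclearNorm X = D.trace := by
    rw [hX, nuclearNorm_mul_diagonal_mul_transpose hσ hU hV, trace_diagonal]
  have hhalf : (1 / 2) * ((U * D * Uᵀ).trace + (V * D * Vᵀ).trace) = nuclearNorm X := by
    rw [trace_mul_mul_transpose_of_transpose_mul_eq_one hU,
      trace_mul_mul_transpose_of_transpose_mul_eq_one hV, hnuc]
    ring
  refine ⟨hblock, hhalf, ⟨_, _, hblock, hhalf.symm⟩, ?_⟩
  rintro c ⟨W₁, W₂, hW, rfl⟩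
  have hlower := hW.two_mul_trace_le_trace_add_trace_of_fromBlocks hU hV
  rw [hUXV, ← hnuc] at hlower
  linarith
end

section
/- Let 𝓑 : ℝ^{m×n} → ℝ^L be linear, d ∈ ℝ^L, μ > 0, and let (Ū, V̄) with Ū ∈ ℝ^{m×r}, V̄ ∈ ℝ^{r×n} be a stationary point of f(U,V) = (1/2)(‖U‖_F² + ‖V‖_F²) + (μ/2)‖𝓑(UV) − d‖₂². If ‖μ 𝓑*(𝓑(ŪV̄) − d)‖₂ ≤ 1 (spectral norm), then X̄ = ŪV̄ is a global minimizer of F(X) = ‖X‖_* + (μ/2)‖𝓑(X) − d‖₂² over X ∈ ℝ^{m×n}. -/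
open Matrix

/-! Write `G = μ 𝓑*(𝓑(ŪV̄) - d)`. The stationarity equations `G V̄ᵀ = -Ū` and `Gᵀ Ū = -V̄ᵀ`
force the factorization to be balanced, `ŪᵀŪ = V̄V̄ᵀ`; hence `(ŪV̄)ᵀ(ŪV̄) = (V̄ᵀV̄)²`, so that
`‖ŪV̄‖_* = tr(V̄ᵀV̄) = -⟨G, ŪV̄⟩`. A matrix of spectral norm at most one satisfies
`|⟨G, X⟩| ≤ ‖X‖_*` (expand the trace in an eigenbasis of `XᵀX` and use Cauchy–Schwarz), so `-G`
is a subgradient of the nuclear norm at `ŪV̄`. As `G` is also the gradient of the convex quadratic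
term at `ŪV̄`, the two first-order bounds add up to `F(X) ≥ F(ŪV̄)`. -/

open scoped MatrixOrder

theorem Matrix.PosSemidef.trace_sqrt_s11 {ι : Type*} [Fintype ι] [DecidableEq ι]
    {A : Matrix ι ι ℝ} (hA : A.PosSemidef) :
    (CFC.sqrt A).trace = ∑ i, √(hA.1.eigenvalues i) := by
  rw [CFC.sqrt_eq_cfc, cfc_nnreal_eq_real _ A, hA.1.cfc_eq, IsHermitian.cfc,
    Unitary.conjStarAlgAut_apply, trace_mul_cycle, Unitary.coe_star_mul_self, one_mul,
    trace_diagonal]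
  simp [Real.coe_toNNReal', max_eq_left (hA.eigenvalues_nonneg _)]

theorem nuclearNorm_eq_trace_of_mul_self_eq_s11 {m n : ℕ} {X : Matrix (Fin m) (Fin n) ℝ}
    {P : Matrix (Fin n) (Fin n) ℝ} (hP : P.PosSemidef) (h : P * P = Xᵀ * X) :
    nuclearNorm X = P.trace := by
  have hXX : (Xᵀ * X).PosSemidef := posSemidef_conjTranspose_mul_self X
  rw [← CFC.sqrt_unique h hP.nonneg, hXX.trace_sqrt_s11]
  rfl

theorem transpose_mul_self_le_one_of_specNorm_le_one {m n : ℕ} {G : Matrix (Fin m) (Fin n) ℝ}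
    (hG : specNorm G ≤ 1) : Gᵀ * G ≤ 1 := by
  have hH : (Gᵀ * G).IsHermitian := isHermitian_conjTranspose_mul_self G
  have hle_iff := le_algebraMap_iff_spectrum_le (r := (1 : ℝ)) hH.isSelfAdjoint
  rw [map_one] at hle_iff
  rw [hle_iff, hH.spectrum_real_eq_range_eigenvalues]
  rintro _ ⟨i, rfl⟩
  exact Real.sqrt_le_one.mp ((le_ciSup (Set.finite_range _).bddAbove i).trans hG)

theorem dotProduct_mulVec_self_le_of_specNorm_le_one {m n : ℕ} {G : Matrix (Fin m) (Fin n) ℝ}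
    (hG : specNorm G ≤ 1) (v : Fin n → ℝ) : (G *ᵥ v) ⬝ᵥ (G *ᵥ v) ≤ v ⬝ᵥ v := by
  have h := (le_iff.mp (transpose_mul_self_le_one_of_specNorm_le_one hG)).dotProduct_mulVec_nonneg v
  rwa [star_trivial, sub_mulVec, one_mulVec, dotProduct_sub, ← mulVec_mulVec,
    dotProduct_transpose_mulVec, sub_nonneg] at h

theorem Matrix.trace_eq_sum_dotProduct_mulVec {ι : Type*} [Fintype ι] [DecidableEq ι]
    (M : Matrix ι ι ℝ) (b : OrthonormalBasis ι ℝ (EuclideanSpace ℝ ι)) :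
    M.trace = ∑ j, ⇑(b j) ⬝ᵥ (M *ᵥ ⇑(b j)) := by
  have htrace : (toLpLin 2 2 M).trace ℝ _ = M.trace := by
    rw [toLpLin_eq_toLin, LinearMap.trace_eq_matrix_trace ℝ (PiLp.basisFun 2 ℝ ι),
      LinearMap.toMatrix_toLin]
  rw [← htrace, LinearMap.trace_eq_sum_inner _ b]
  simp [EuclideanSpace.inner_eq_star_dotProduct, toLpLin_apply, dotProduct_comm]

theorem dotProduct_mul_self_le {ι : Type*} [Fintype ι] (u w : ι → ℝ) :
    (u ⬝ᵥ w) * (u ⬝ᵥ w) ≤ (u ⬝ᵥ u) * (w ⬝ᵥ w) := by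
  simpa only [EuclideanSpace.inner_eq_star_dotProduct, star_trivial, dotProduct_comm w u] using
    real_inner_mul_inner_self_le (WithLp.toLp 2 u) (WithLp.toLp 2 w)

theorem abs_trace_transpose_mul_le_nuclearNorm {m n : ℕ} {G : Matrix (Fin m) (Fin n) ℝ}
    (hG : specNorm G ≤ 1) (X : Matrix (Fin m) (Fin n) ℝ) :
    |(Gᵀ * X).trace| ≤ nuclearNorm X := by
  have hH := isHermitian_conjTranspose_mul_self X
  set q : Fin n → Fin n → ℝ := fun j => ⇑(hH.eigenvectorBasis j)
  have hunit (j : Fin n) : q j ⬝ᵥ q j = 1 := by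
    have h := hH.eigenvectorBasis.inner_eq_one j
    rwa [EuclideanSpace.inner_eq_star_dotProduct, star_trivial] at h
  have hX (j : Fin n) : (X *ᵥ q j) ⬝ᵥ (X *ᵥ q j) = hH.eigenvalues j := by
    rw [← dotProduct_transpose_mulVec, mulVec_mulVec, ← conjTranspose_eq_transpose_of_trivial,
      hH.mulVec_eigenvectorBasis, dotProduct_smul, hunit, smul_eq_mul, mul_one]
  have hterm (j : Fin n) : |(G *ᵥ q j) ⬝ᵥ (X *ᵥ q j)| ≤ √(hH.eigenvalues j) := by
    refine Real.abs_le_sqrt ?_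
    calc ((G *ᵥ q j) ⬝ᵥ (X *ᵥ q j)) ^ 2
        ≤ ((G *ᵥ q j) ⬝ᵥ (G *ᵥ q j)) * ((X *ᵥ q j) ⬝ᵥ (X *ᵥ q j)) :=
          (sq _).trans_le (dotProduct_mul_self_le _ _)
      _ ≤ 1 * hH.eigenvalues j := by
          rw [hX j]
          gcongr
          · exact (posSemidef_conjTranspose_mul_self X).eigenvalues_nonneg j
          · exact (dotProduct_mulVec_self_le_of_specNorm_le_one hG _).trans (hunit j).le
      _ = hH.eigenvalues j := one_mul _
  calc |(Gᵀ * X).trace| = |∑ j, (G *ᵥ q j) ⬝ᵥ (X *ᵥ q j)| := by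
        rw [trace_eq_sum_dotProduct_mulVec _ hH.eigenvectorBasis]
        simp_rw [← mulVec_mulVec, dotProduct_transpose_mulVec, dotProduct_comm (X *ᵥ _)]
        rfl
    _ ≤ ∑ j, |(G *ᵥ q j) ⬝ᵥ (X *ᵥ q j)| := Finset.abs_sum_le_sum_abs _ _
    _ ≤ nuclearNorm X := Finset.sum_le_sum fun j _ => hterm j

theorem transpose_mul_self_eq_of_stationary {ι κ ρ R : Type*} [Fintype ι] [Fintype κ]
    [Fintype ρ] [CommRing R] {G : Matrix ι κ R} {U : Matrix ι ρ R} {V : Matrix ρ κ R}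
    (hU : G * Vᵀ + U = 0) (hV : Gᵀ * U + Vᵀ = 0) : Uᵀ * U = V * Vᵀ := by
  have hUt : Uᵀ = -(V * Gᵀ) := by
    rw [eq_neg_of_add_eq_zero_right hU, transpose_neg, transpose_mul, transpose_transpose]
  rw [hUt, Matrix.neg_mul, Matrix.mul_assoc, eq_neg_of_add_eq_zero_left hV, Matrix.mul_neg,
    neg_neg]

theorem nuclearNorm_mul_eq_trace_of_balanced {m n r : ℕ} {U : Matrix (Fin m) (Fin r) ℝ}
    {V : Matrix (Fin r) (Fin n) ℝ} (h : Uᵀ * U = V * Vᵀ) :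
    nuclearNorm (U * V) = (Vᵀ * V).trace := by
  refine nuclearNorm_eq_trace_of_mul_self_eq_s11 (posSemidef_conjTranspose_mul_self V) ?_
  calc Vᵀ * V * (Vᵀ * V) = Vᵀ * (V * Vᵀ) * V := by simp only [Matrix.mul_assoc]
    _ = (U * V)ᵀ * (U * V) := by rw [← h, transpose_mul]; simp only [Matrix.mul_assoc]

theorem sum_sub_sq_add_two_mul_le {ι : Type*} [Fintype ι] (a b d : ι → ℝ) :
    ∑ i, (b i - d i) ^ 2 + 2 * ∑ i, (b i - d i) * (a i - b i) ≤ ∑ i, (a i - d i) ^ 2 := by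
  rw [Finset.mul_sum, ← Finset.sum_add_distrib]
  exact Finset.sum_le_sum fun i _ => by nlinarith [sq_nonneg (a i - b i)]

theorem stationary_point_global_min {m n r L : ℕ} (μ : ℝ) (hμ : 0 < μ)
    (B : Matrix (Fin m) (Fin n) ℝ →ₗ[ℝ] (Fin L → ℝ))
    (Bstar : (Fin L → ℝ) →ₗ[ℝ] Matrix (Fin m) (Fin n) ℝ)
    (hadj : ∀ (z : Fin L → ℝ) (A : Matrix (Fin m) (Fin n) ℝ),
      frobInner (Bstar z) A = ∑ i, z i * B A i)
    (d : Fin L → ℝ)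
    (U : Matrix (Fin m) (Fin r) ℝ) (V : Matrix (Fin r) (Fin n) ℝ)
    (hU : (μ • Bstar (B (U * V) - d)) * Vᵀ + U = 0)
    (hV : (μ • Bstar (B (U * V) - d))ᵀ * U + Vᵀ = 0)
    (hspec : specNorm (μ • Bstar (B (U * V) - d)) ≤ 1) :
    ∀ X : Matrix (Fin m) (Fin n) ℝ,
      nuclearNorm (U * V) + μ / 2 * ∑ i, (B (U * V) i - d i) ^ 2 ≤
      nuclearNorm X + μ / 2 * ∑ i, (B X i - d i) ^ 2 := by
  intro X
  set G := μ • Bstar (B (U * V) - d)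
  have hpair (A : Matrix (Fin m) (Fin n) ℝ) :
      (Gᵀ * A).trace = μ * ∑ i, (B (U * V) i - d i) * B A i := by
    rw [transpose_smul, smul_mul, trace_smul, smul_eq_mul, ← frobInner, hadj]
    rfl
  have hUV : (Gᵀ * (U * V)).trace = -nuclearNorm (U * V) := by
    rw [nuclearNorm_mul_eq_trace_of_balanced (transpose_mul_self_eq_of_stationary hU hV),
      ← Matrix.mul_assoc, eq_neg_of_add_eq_zero_left hV, Matrix.neg_mul, trace_neg]
  have hX := (abs_le.mp (abs_trace_transpose_mul_le_nuclearNorm hspec X)).1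
  have hquad := sum_sub_sq_add_two_mul_le (B X) (B (U * V)) d
  simp only [mul_sub, Finset.sum_sub_distrib] at hquad
  rw [hpair] at hUV hX
  linarith [mul_le_mul_of_nonneg_left hquad (half_pos hμ).le]
end
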